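/- Let X_1,...,X_n be i.i.d. real random variables with distribution function F satisfying the regular variation condition sup_{x>1} |((1−F(tx))/(1−F(t)))·x^{1/γ} − 1| → 0 as t → ∞, for some γ > 0. Let k = k(n) be a sequence with k → ∞ and k/n → 0. Let U(x) = F^{←}(1 − 1/x). Then for any constant ζ with 0 < ζ ≤ γ/(2(1+γ)), there exists N such that for all n ≥ N, P(|X_{n−k:n}/U(n/k) − 1| > ζ) ≤ 4 exp(−kζ²/(16γ²)). -/

import Mathlib

open MeasureTheory ProbabilityTheory Filter

set_option linter.unusedSectionVars false
/-- The `m`-th smallest value (1-indexed) among `x 0, …, x (n-1)`. -/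
noncomputable def orderStat (n m : ℕ) (x : Fin n → ℝ) : ℝ :=
  ((List.ofFn x).mergeSort (· ≤ ·)).getD (m - 1) 0


theorem sorted_le_getElem {l : List ℝ} (hs : l.Pairwise (· ≤ ·)) {i j : ℕ} (hij : i ≤ j)
    (hj : j < l.length) : l[i]'(lt_of_le_of_lt hij hj) ≤ l[j] := by
  rcases eq_or_lt_of_le hij with rfl | h
  · rfl
  · exact List.pairwise_iff_getElem.1 hs i j _ hj h

theorem sorted_countP_iff {l : List ℝ} (hs : l.Pairwise (· ≤ ·)) {m : ℕ}
    (h1 : 1 ≤ m) (h2 : m ≤ l.length) {p : ℝ → Bool}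
    (hp : ∀ a b : ℝ, a ≤ b → p b = true → p a = true) :
    p (l.getD (m-1) 0) = true ↔ m ≤ l.countP p := by
  have hlt : m - 1 < l.length := by omega
  rw [List.getD_eq_getElem l 0 hlt]
  constructor
  · intro hpm
    have hsplit : l.countP p = (l.take m).countP p + (l.drop m).countP p := by
      rw [← List.countP_append, List.take_append_drop]
    have htake : (l.take m).countP p = (l.take m).length := by
      apply List.countP_eq_length.2
      intro a ha
      rw [List.mem_iff_getElem] at ha
      obtain ⟨j, hj, rfl⟩ := ha
      have hjm : j < m := by simp [List.length_take] at hj; omega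
      have hjl : j < l.length := by omega
      have : (l.take m)[j]'hj = l[j]'hjl := List.getElem_take
      rw [this]
      exact hp _ _ (sorted_le_getElem hs (by omega) hlt) hpm
    have hlen : (l.take m).length = m := by simp; omega
    omega
  · intro hcnt
    by_contra hpm
    have hsplit : l.countP p = (l.take (m-1)).countP p + (l.drop (m-1)).countP p := by
      rw [← List.countP_append, List.take_append_drop]
    have hdrop : (l.drop (m-1)).countP p = 0 := by
      rw [List.countP_eq_zero]
      intro a ha
      rw [List.mem_iff_getElem] at ha
      obtain ⟨j, hj, rfl⟩ := ha
      have hjl : m - 1 + j < l.length := by simp [List.length_drop] at hj; omega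
      have : (l.drop (m-1))[j]'hj = l[m-1+j]'hjl := List.getElem_drop
      rw [this]
      intro hpa
      exact hpm (hp _ _ (sorted_le_getElem hs (by omega) hjl) hpa)
    have htake : (l.take (m-1)).countP p ≤ m - 1 := by
      calc (l.take (m-1)).countP p ≤ (l.take (m-1)).length := List.countP_le_length
      _ ≤ m - 1 := by simp
    omega

theorem countP_ofFn (n : ℕ) (x : Fin n → ℝ) (p : ℝ → Bool) :
    (List.ofFn x).countP p = (Finset.univ.filter (fun i => p (x i))).card := by
  induction n with
  | zero => simp
  | succ m ih =>
    rw [List.ofFn_succ, List.countP_cons, ih (fun i => x i.succ),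
      Finset.card_filter, Finset.card_filter, Fin.sum_univ_succ]
    simp [add_comm]

theorem orderStat_pred_iff {n m : ℕ} (h1 : 1 ≤ m) (h2 : m ≤ n) (x : Fin n → ℝ)
    {p : ℝ → Bool} (hp : ∀ a b : ℝ, a ≤ b → p b = true → p a = true) :
    p (orderStat n m x) = true ↔ m ≤ (Finset.univ.filter (fun i => p (x i))).card := by
  have hs : ((List.ofFn x).mergeSort (· ≤ ·)).Pairwise (· ≤ ·) := List.pairwise_mergeSort' _ _
  have hlen : ((List.ofFn x).mergeSort (· ≤ ·)).length = n := by
    rw [List.length_mergeSort, List.length_ofFn]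
  rw [orderStat, sorted_countP_iff hs h1 (by omega) hp,
    (List.mergeSort_perm _ _).countP_eq, countP_ofFn]

theorem orderStat_le_iff {n m : ℕ} (h1 : 1 ≤ m) (h2 : m ≤ n) (x : Fin n → ℝ) (y : ℝ) :
    orderStat n m x ≤ y ↔ m ≤ (Finset.univ.filter (fun i => x i ≤ y)).card := by
  have := orderStat_pred_iff h1 h2 x (p := fun a => decide (a ≤ y))
    (fun a b hab hb => by simp_all; linarith)
  simpa using this

theorem orderStat_lt_iff {n m : ℕ} (h1 : 1 ≤ m) (h2 : m ≤ n) (x : Fin n → ℝ) (y : ℝ) :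
    orderStat n m x < y ↔ m ≤ (Finset.univ.filter (fun i => x i < y)).card := by
  have := orderStat_pred_iff h1 h2 x (p := fun a => decide (a < y))
    (fun a b hab hb => by simp_all; linarith)
  simpa using this

section Chernoff
open Finset

noncomputable def ind01 (s : Set ℝ) : ℝ → ℝ := s.indicator (fun _ => 1)

lemma ind01_nonneg (s : Set ℝ) (a : ℝ) : 0 ≤ ind01 s a := by
  unfold ind01; classical
  rw [Set.indicator_apply]; split <;> norm_num

lemma ind01_le_one (s : Set ℝ) (a : ℝ) : ind01 s a ≤ 1 := by
  unfold ind01; classical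
  rw [Set.indicator_apply]; split <;> norm_num

lemma ind01_measurable {s : Set ℝ} (hs : MeasurableSet s) : Measurable (ind01 s) :=
  measurable_const.indicator hs

variable {Ω : Type*} [MeasurableSpace Ω] (P : Measure Ω) [IsProbabilityMeasure P]

lemma mgf_indicator_comp (Y : Ω → ℝ) (hm : Measurable Y) (s : Set ℝ) (hs : MeasurableSet s)
    (t : ℝ) :
    mgf (fun ω => ind01 s (Y ω)) P t = 1 + (P (Y ⁻¹' s)).toReal * (Real.exp t - 1) := by
  have hpre : MeasurableSet (Y ⁻¹' s) := hm hs
  have hfun : (fun ω => Real.exp (t * ind01 s (Y ω)))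
      = fun ω => 1 + (Y ⁻¹' s).indicator (fun _ => Real.exp t - 1) ω := by
    funext ω
    unfold ind01
    by_cases h : Y ω ∈ s <;>
      simp [Set.indicator_apply, h, Set.mem_preimage, Real.exp_zero]
  rw [mgf, hfun, integral_add (integrable_const _) ((integrable_const _).indicator hpre),
    integral_const, integral_indicator_const _ hpre]
  simp [mul_comm, Measure.real]

lemma measurable_indSum (Y : ℕ → Ω → ℝ) (hm : ∀ i, Measurable (Y i)) {s : Set ℝ}
    (hs : MeasurableSet s) (n : ℕ) :
    Measurable (fun ω => ∑ i ∈ range n, ind01 s (Y i ω)) :=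
  Finset.measurable_sum _ (fun i _ => (ind01_measurable hs).comp (hm i))

lemma integrable_exp_indSum (Y : ℕ → Ω → ℝ) (hm : ∀ i, Measurable (Y i)) {s : Set ℝ}
    (hs : MeasurableSet s) (n : ℕ) (t : ℝ) :
    Integrable (fun ω => Real.exp (t * ∑ i ∈ range n, ind01 s (Y i ω))) P := by
  apply Integrable.mono' (g := fun _ => Real.exp (|t| * n)) (integrable_const _)
  · exact (((measurable_indSum Y hm hs n).const_mul t).exp).aestronglyMeasurable
  · apply ae_of_all
    intro ω
    rw [Real.norm_eq_abs, Real.abs_exp, Real.exp_le_exp]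
    have h1 : ∑ i ∈ range n, ind01 s (Y i ω) ≤ n := by
      calc (∑ i ∈ range n, ind01 s (Y i ω)) ≤ ∑ _i ∈ range n, (1:ℝ) :=
            Finset.sum_le_sum (fun i _ => ind01_le_one s _)
        _ = n := by simp
    have h0 : (0:ℝ) ≤ ∑ i ∈ range n, ind01 s (Y i ω) :=
      Finset.sum_nonneg (fun i _ => ind01_nonneg s _)
    calc t * ∑ i ∈ range n, ind01 s (Y i ω)
        ≤ |t| * ∑ i ∈ range n, ind01 s (Y i ω) :=
          mul_le_mul_of_nonneg_right (le_abs_self t) h0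
      _ ≤ |t| * n := mul_le_mul_of_nonneg_left h1 (abs_nonneg t)

lemma mgf_indSum (Y : ℕ → Ω → ℝ) (hm : ∀ i, Measurable (Y i))
    (hind : iIndepFun Y P)
    {s : Set ℝ} (hs : MeasurableSet s) (n : ℕ) (t : ℝ) (p : ℝ)
    (hpi : ∀ i, (P (Y i ⁻¹' s)).toReal = p) :
    mgf (fun ω => ∑ i ∈ range n, ind01 s (Y i ω)) P t
      = (1 + p * (Real.exp t - 1)) ^ n := by
  have hind' : iIndepFun (fun i => ind01 s ∘ Y i) P :=
    hind.comp (fun _ => ind01 s) (fun _ => ind01_measurable hs)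
  have hsum : (fun ω => ∑ i ∈ range n, ind01 s (Y i ω))
      = ∑ i ∈ range n, (fun i => ind01 s ∘ Y i) i := by
    funext ω; rw [Finset.sum_apply]; rfl
  rw [hsum, hind'.mgf_sum (fun i => (ind01_measurable hs).comp (hm i))]
  have heq : ∀ i ∈ range n, mgf ((fun i => ind01 s ∘ Y i) i) P t
      = 1 + p * (Real.exp t - 1) := by
    intro i _
    have h2 := mgf_indicator_comp P (Y i) (hm i) s hs t
    rw [← hpi i, ← h2]; rfl
  rw [Finset.prod_congr rfl heq, Finset.prod_const, Finset.card_range]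

lemma exp_quad_bound {x : ℝ} (hx : |x| ≤ 1) : Real.exp x ≤ 1 + x + (3/4) * x^2 := by
  have h := Real.exp_bound hx (n := 2) (by norm_num)
  have hsum : ∑ m ∈ range 2, x ^ m / m.factorial = 1 + x := by
    simp [Finset.sum_range_succ]
  rw [hsum] at h
  have h2 := (abs_sub_le_iff.1 h).1
  have : |x|^2 = x^2 := sq_abs x
  rw [this] at h2
  norm_num at h2 ⊢
  linarith

lemma chernoff_upper_tail (Y : ℕ → Ω → ℝ) (hm : ∀ i, Measurable (Y i))
    (hind : iIndepFun Y P)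
    {s : Set ℝ} (hs : MeasurableSet s) (n K : ℕ) (p δ : ℝ)
    (hpi : ∀ i, (P (Y i ⁻¹' s)).toReal = p)
    (hδ1 : 0 < δ) (hδ2 : δ ≤ 1/4)
    (hp : (n:ℝ) * p ≤ (1 - δ) * K) :
    (P {ω | (K:ℝ) ≤ ∑ i ∈ range n, ind01 s (Y i ω)}).toReal
      ≤ Real.exp (-(K:ℝ) * δ^2 / 4) := by
  have hp0 : 0 ≤ p := (hpi 0) ▸ ENNReal.toReal_nonneg
  set t : ℝ := δ/2 with ht
  have ht0 : 0 ≤ t := by positivity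
  have h := measure_ge_le_exp_mul_mgf (μ := P)
    (X := fun ω => ∑ i ∈ range n, ind01 s (Y i ω)) (K:ℝ) ht0
    (integrable_exp_indSum P Y hm hs n t)
  rw [mgf_indSum P Y hm hind hs n t p hpi] at h
  refine h.trans ?_
  have hz : 0 ≤ Real.exp t - 1 := by
    have := Real.one_le_exp ht0; linarith
  have h1 : (1 + p * (Real.exp t - 1)) ^ n ≤ Real.exp ((n:ℝ) * (p * (Real.exp t - 1))) := by
    calc (1 + p * (Real.exp t - 1)) ^ n ≤ (Real.exp (p * (Real.exp t - 1))) ^ n := by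
          apply pow_le_pow_left₀ (by positivity) _ n
          linarith [Real.add_one_le_exp (p * (Real.exp t - 1))]
      _ = Real.exp ((n:ℝ) * (p * (Real.exp t - 1))) := by
          rw [← Real.exp_nat_mul]
  have h2 : (n:ℝ) * (p * (Real.exp t - 1)) ≤ (1 - δ) * K * (Real.exp t - 1) := by
    rw [← mul_assoc]
    exact mul_le_mul_of_nonneg_right hp hz
  have hexpt : Real.exp t ≤ 1 + t + (3/4) * t^2 :=
    exp_quad_bound (by rw [abs_of_nonneg ht0]; linarith)
  have hK0 : (0:ℝ) ≤ K := Nat.cast_nonneg K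
  calc Real.exp (-t * K) * (1 + p * (Real.exp t - 1)) ^ n
      ≤ Real.exp (-t * K) * Real.exp ((1 - δ) * K * (Real.exp t - 1)) := by
        apply mul_le_mul_of_nonneg_left _ (Real.exp_pos _).le
        exact h1.trans (Real.exp_le_exp.2 h2)
    _ = Real.exp (-t * K + (1 - δ) * K * (Real.exp t - 1)) := by rw [← Real.exp_add]
    _ ≤ Real.exp (-(K:ℝ) * δ^2 / 4) := by
        apply Real.exp_le_exp.2
        have key : -t + (1 - δ) * (Real.exp t - 1) ≤ -δ^2/4 := by
          nlinarith [sq_nonneg δ, sq_nonneg (Real.exp t - 1 - t)]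
        nlinarith [mul_le_mul_of_nonneg_right key hK0]

lemma chernoff_lower_tail (Y : ℕ → Ω → ℝ) (hm : ∀ i, Measurable (Y i))
    (hind : iIndepFun Y P)
    {s : Set ℝ} (hs : MeasurableSet s) (n K : ℕ) (p δ : ℝ)
    (hpi : ∀ i, (P (Y i ⁻¹' s)).toReal = p)
    (hδ1 : 0 < δ) (hδ2 : δ ≤ 1/4)
    (hp : (1 + δ) * K ≤ (n:ℝ) * p) :
    (P {ω | ∑ i ∈ range n, ind01 s (Y i ω) ≤ (K:ℝ)}).toReal
      ≤ Real.exp (-(K:ℝ) * δ^2 / 4) := by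
  have hp0 : 0 ≤ p := (hpi 0) ▸ ENNReal.toReal_nonneg
  have hp1 : p ≤ 1 := by
    rw [← (hpi 0)]
    calc (P (Y 0 ⁻¹' s)).toReal ≤ (P Set.univ).toReal := by
          apply ENNReal.toReal_mono (measure_ne_top _ _) (measure_mono (Set.subset_univ _))
      _ = 1 := by simp
  set t : ℝ := -(δ/2) with ht
  have ht0 : t ≤ 0 := by simp [ht]; positivity
  have h := measure_le_le_exp_mul_mgf (μ := P)
    (X := fun ω => ∑ i ∈ range n, ind01 s (Y i ω)) (K:ℝ) ht0
    (integrable_exp_indSum P Y hm hs n t)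
  rw [mgf_indSum P Y hm hind hs n t p hpi] at h
  refine h.trans ?_
  have hz : Real.exp t - 1 ≤ 0 := by
    have : Real.exp t ≤ 1 := by
      rw [Real.exp_le_one_iff]; exact ht0
    linarith
  have hfac : 0 ≤ 1 + p * (Real.exp t - 1) := by
    have h1 : p * (Real.exp t - 1) ≥ 1 * (Real.exp t - 1) :=
      mul_le_mul_of_nonpos_right hp1 hz
    have := Real.exp_pos t
    linarith
  have h1 : (1 + p * (Real.exp t - 1)) ^ n ≤ Real.exp ((n:ℝ) * (p * (Real.exp t - 1))) := by
    calc (1 + p * (Real.exp t - 1)) ^ n ≤ (Real.exp (p * (Real.exp t - 1))) ^ n := by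
          apply pow_le_pow_left₀ hfac _ n
          linarith [Real.add_one_le_exp (p * (Real.exp t - 1))]
      _ = Real.exp ((n:ℝ) * (p * (Real.exp t - 1))) := by rw [← Real.exp_nat_mul]
  have h2 : (n:ℝ) * (p * (Real.exp t - 1)) ≤ (1 + δ) * K * (Real.exp t - 1) := by
    rw [← mul_assoc]
    exact mul_le_mul_of_nonpos_right hp hz
  have hexpt : Real.exp t ≤ 1 - δ/2 + (3/4) * (δ/2)^2 := by
    have := exp_quad_bound (x := t) (by rw [ht, abs_neg, abs_of_nonneg (by positivity : (0:ℝ) ≤ δ/2)]; linarith)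
    rw [ht] at this ⊢
    nlinarith [this]
  have hK0 : (0:ℝ) ≤ K := Nat.cast_nonneg K
  calc Real.exp (-t * K) * (1 + p * (Real.exp t - 1)) ^ n
      ≤ Real.exp (-t * K) * Real.exp ((1 + δ) * K * (Real.exp t - 1)) := by
        apply mul_le_mul_of_nonneg_left _ (Real.exp_pos _).le
        exact h1.trans (Real.exp_le_exp.2 h2)
    _ = Real.exp (-t * K + (1 + δ) * K * (Real.exp t - 1)) := by rw [← Real.exp_add]
    _ ≤ Real.exp (-(K:ℝ) * δ^2 / 4) := by
        apply Real.exp_le_exp.2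
        have key : -t + (1 + δ) * (Real.exp t - 1) ≤ -δ^2/4 := by
          rw [ht]
          nlinarith [sq_nonneg δ]
        nlinarith [mul_le_mul_of_nonneg_right key hK0]

end Chernoff

section CDF
variable {Ω : Type*} [MeasurableSpace Ω] (P : Measure Ω) [IsProbabilityMeasure P]
  (X0 : Ω → ℝ) (hm : Measurable X0) (F : ℝ → ℝ)
  (hF : ∀ x, F x = (P {ω | X0 ω ≤ x}).toReal)

include hF in
lemma cdf_mono : Monotone F := by
  intro a b hab
  rw [hF, hF]
  exact ENNReal.toReal_mono (measure_ne_top _ _)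
    (measure_mono (fun ω h => le_trans h hab))

include hF in
lemma cdf_nonneg : ∀ x, 0 ≤ F x := fun x => (hF x) ▸ ENNReal.toReal_nonneg

include hF in
lemma cdf_le_one : ∀ x, F x ≤ 1 := by
  intro x
  rw [hF]
  calc (P {ω | X0 ω ≤ x}).toReal ≤ (P Set.univ).toReal :=
        ENNReal.toReal_mono (measure_ne_top _ _) (measure_mono (Set.subset_univ _))
    _ = 1 := by simp

include hm hF in
lemma cdf_compl : ∀ y, (P {ω | y < X0 ω}).toReal = 1 - F y := by
  intro y
  have hs : MeasurableSet {ω | X0 ω ≤ y} := hm measurableSet_Iic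
  have hc : {ω | y < X0 ω} = {ω | X0 ω ≤ y}ᶜ := by
    ext ω; simp [not_le]
  rw [hc, measure_compl hs (measure_ne_top _ _), hF]
  simp only [measure_univ]
  rw [ENNReal.toReal_sub_of_le prob_le_one ENNReal.one_ne_top, ENNReal.toReal_one]

include hm hF in
lemma cdf_right_cont : ∀ y c : ℝ, (∀ η : ℝ, 0 < η → c ≤ F (y + η)) → c ≤ F y := by
  intro y c hc
  set s : ℕ → Set Ω := fun m => {ω | X0 ω ≤ y + 1/(m+1)} with hsdef
  have hanti : Antitone s := by
    intro a b hab ω hω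
    simp only [hsdef, Set.mem_setOf_eq] at *
    have : (1:ℝ)/(b+1) ≤ 1/(a+1) := by
      apply one_div_le_one_div_of_le (by positivity)
      exact_mod_cast by omega
    linarith
  have hint : ⋂ m, s m = {ω | X0 ω ≤ y} := by
    ext ω
    simp only [Set.mem_iInter, hsdef, Set.mem_setOf_eq]
    constructor
    · intro h
      by_contra hlt
      push_neg at hlt
      obtain ⟨m, hm'⟩ := exists_nat_one_div_lt (sub_pos.2 hlt)
      exact absurd (h m) (by push_neg; linarith)
    · intro h m
      have : (0:ℝ) < 1/(m+1) := by positivity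
      linarith
  have htt : Tendsto (fun m => P (s m)) atTop (nhds (P {ω | X0 ω ≤ y})) := by
    have := tendsto_measure_iInter_atTop (μ := P) (s := s)
      (fun m => (hm measurableSet_Iic).nullMeasurableSet) hanti ⟨0, measure_ne_top _ _⟩
    rwa [hint] at this
  have htr : Tendsto (fun m => (P (s m)).toReal) atTop (nhds (P {ω | X0 ω ≤ y}).toReal) :=
    (ENNReal.tendsto_toReal (measure_ne_top _ _)).comp htt
  rw [hF]
  apply ge_of_tendsto htr
  apply Eventually.of_forall
  intro m
  have := hc (1/(m+1)) (by positivity)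
  rw [hF] at this
  exact this

include hm hF in
lemma cdf_top : ∀ c : ℝ, c < 1 → ∃ y : ℝ, c ≤ F y := by
  intro c hc
  set s : ℕ → Set Ω := fun m => {ω | X0 ω ≤ m} with hsdef
  have hmono : Monotone s := by
    intro a b hab ω hω
    simp only [hsdef, Set.mem_setOf_eq] at *
    have : (a:ℝ) ≤ b := by exact_mod_cast hab
    linarith
  have hunion : ⋃ m, s m = Set.univ := by
    ext ω
    simp only [Set.mem_iUnion, hsdef, Set.mem_setOf_eq, Set.mem_univ, iff_true]
    obtain ⟨m, hm'⟩ := exists_nat_gt (X0 ω)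
    exact ⟨m, hm'.le⟩
  have htt : Tendsto (fun m => P (s m)) atTop (nhds 1) := by
    have := tendsto_measure_iUnion_atTop (μ := P) (s := s) hmono
    rwa [hunion, measure_univ] at this
  have htr : Tendsto (fun m => (P (s m)).toReal) atTop (nhds 1) := by
    have := (ENNReal.tendsto_toReal ENNReal.one_ne_top).comp htt
    simpa [Function.comp_def] using this
  have hev : ∀ᶠ m : ℕ in atTop, c ≤ (P (s m)).toReal :=
    htr.eventually (eventually_ge_nhds hc)
  obtain ⟨m, hm'⟩ := hev.exists
  exact ⟨m, by rw [hF]; exact hm'⟩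

include hm hF in
lemma cdf_bot : ∃ y : ℝ, F y < 1/2 := by
  set s : ℕ → Set Ω := fun m => {ω | X0 ω ≤ -(m:ℝ)} with hsdef
  have hanti : Antitone s := by
    intro a b hab ω hω
    simp only [hsdef, Set.mem_setOf_eq] at *
    have : (a:ℝ) ≤ b := by exact_mod_cast hab
    linarith
  have hint : ⋂ m, s m = ∅ := by
    ext ω
    simp only [Set.mem_iInter, hsdef, Set.mem_setOf_eq, Set.mem_empty_iff_false, iff_false]
    push_neg
    obtain ⟨m, hm'⟩ := exists_nat_gt (-(X0 ω))
    exact ⟨m, by linarith⟩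
  have htt : Tendsto (fun m => P (s m)) atTop (nhds 0) := by
    have := tendsto_measure_iInter_atTop (μ := P) (s := s)
      (fun m => (hm measurableSet_Iic).nullMeasurableSet) hanti ⟨0, measure_ne_top _ _⟩
    rwa [hint, measure_empty] at this
  have htr : Tendsto (fun m => (P (s m)).toReal) atTop (nhds 0) := by
    have := (ENNReal.tendsto_toReal (by simp : (0:ENNReal) ≠ ⊤)).comp htt
    simpa [Function.comp_def] using this
  have hev : ∀ᶠ m : ℕ in atTop, (P (s m)).toReal < 1/2 :=
    htr.eventually (eventually_lt_nhds (by norm_num))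
  obtain ⟨m, hm'⟩ := hev.exists
  exact ⟨-(m:ℝ), by rw [hF]; exact hm'⟩

end CDF


lemma key_upper {γ ζ : ℝ} (hγ : 0 < γ) (hζ : 0 < ζ) (hζ2 : ζ ≤ γ/(2*(1+γ))) :
    1 + (ζ/(2*γ))^2/8 ≤ (1 - ζ/(2*γ)) * (1+ζ) ^ (1/γ : ℝ) := by
  set δ : ℝ := ζ/(2*γ) with hδ
  have h1γ : 0 < 1 + γ := by linarith
  have h2 : ζ * (2*(1+γ)) ≤ γ := (le_div_iff₀ (by positivity)).1 hζ2
  have hζh : ζ < 1/2 := by nlinarith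
  have hδ0 : 0 < δ := by positivity
  have hδ4 : δ ≤ 1/4 := by
    rw [hδ, div_le_div_iff₀ (by positivity) (by norm_num)]
    nlinarith
  set v : ℝ := Real.log (1+ζ) / γ with hv
  have hlog : ζ/(1+ζ) ≤ Real.log (1+ζ) := by
    have h := Real.log_le_sub_one_of_pos (x := 1/(1+ζ)) (by positivity)
    rw [one_div, Real.log_inv] at h
    have : 1/(1+ζ) - 1 = -(ζ/(1+ζ)) := by field_simp; ring
    rw [one_div] at this
    rw [this] at h
    linarith
  have hv43 : (4/3) * δ ≤ v := by
    rw [hv, hδ, le_div_iff₀ hγ]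
    have h2 : ζ/(1+ζ) ≥ (2/3) * ζ := by
      rw [ge_iff_le, le_div_iff₀ (by positivity)]
      nlinarith
    calc (4/3) * (ζ/(2*γ)) * γ = (2/3) * ζ := by field_simp; ring
      _ ≤ ζ/(1+ζ) := h2
      _ ≤ Real.log (1+ζ) := hlog
  have hv0 : 0 < v := lt_of_lt_of_le (by positivity) hv43
  have hrpow : (1+ζ) ^ (1/γ : ℝ) = Real.exp v := by
    rw [Real.rpow_def_of_pos (by linarith), hv]
    ring_nf
  have hexp : 1 + v + v^2/4 ≤ Real.exp v := by
    have h1 : Real.exp v = (Real.exp (v/2))^2 := by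
      rw [sq, ← Real.exp_add]; ring_nf
    have h2 : 1 + v/2 ≤ Real.exp (v/2) := by linarith [Real.add_one_le_exp (v/2)]
    calc 1 + v + v^2/4 = (1 + v/2)^2 := by ring
      _ ≤ (Real.exp (v/2))^2 := by nlinarith
      _ = Real.exp v := h1.symm
  rw [hrpow]
  have hfinal : 1 + δ^2/8 ≤ (1 - δ) * (1 + v + v^2/4) := by
    rcases le_or_gt v (1/3) with hv3 | hv3
    · have hδv : δ ≤ (3/4) * v := by linarith
      nlinarith [sq_nonneg v, sq_nonneg (v - (4/3)*δ), mul_pos hv0 hδ0]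
    · nlinarith [sq_nonneg v, mul_pos hv0 hδ0]
  calc 1 + δ^2/8 ≤ (1 - δ) * (1 + v + v^2/4) := hfinal
    _ ≤ (1 - δ) * Real.exp v := by nlinarith [hexp]

lemma key_lower {γ ζ : ℝ} (hγ : 0 < γ) (hζ : 0 < ζ) (hζ2 : ζ ≤ γ/(2*(1+γ))) :
    (1 + (ζ/(2*γ))^2/8) * (1 + ζ/(2*γ)) ≤ ((1 - ζ/2)⁻¹ : ℝ) ^ (1/γ : ℝ) := by
  set δ : ℝ := ζ/(2*γ) with hδ
  have h1γ : 0 < 1 + γ := by linarith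
  have h2 : ζ * (2*(1+γ)) ≤ γ := (le_div_iff₀ (by positivity)).1 hζ2
  have hζh : ζ < 1/2 := by nlinarith
  have hδ0 : 0 < δ := by positivity
  have hδ4 : δ ≤ 1/4 := by
    rw [hδ, div_le_div_iff₀ (by positivity) (by norm_num)]
    nlinarith
  have hpos : (0:ℝ) < 1 - ζ/2 := by linarith
  have hlog : Real.log (1 - ζ/2) ≤ -(ζ/2) :=
    le_trans (Real.log_le_sub_one_of_pos hpos) (by linarith)
  have hrpow : ((1 - ζ/2)⁻¹ : ℝ) ^ (1/γ : ℝ) = Real.exp (-(Real.log (1-ζ/2))/γ) := by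
    rw [Real.rpow_def_of_pos (by positivity), Real.log_inv]
    ring_nf
  rw [hrpow]
  have hδle : δ ≤ -(Real.log (1-ζ/2))/γ := by
    rw [hδ, div_le_div_iff₀ (by positivity) hγ]
    nlinarith
  have hexp : 1 + δ + δ^2/4 ≤ Real.exp δ := by
    have h1 : Real.exp δ = (Real.exp (δ/2))^2 := by
      rw [sq, ← Real.exp_add]; ring_nf
    have h2 : 1 + δ/2 ≤ Real.exp (δ/2) := by linarith [Real.add_one_le_exp (δ/2)]
    calc 1 + δ + δ^2/4 = (1 + δ/2)^2 := by ring
      _ ≤ (Real.exp (δ/2))^2 := by nlinarith [Real.exp_pos (δ/2)]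
      _ = Real.exp δ := h1.symm
  calc (1 + δ^2/8) * (1 + δ) ≤ 1 + δ + δ^2/4 := by nlinarith
    _ ≤ Real.exp δ := hexp
    _ ≤ Real.exp (-(Real.log (1-ζ/2))/γ) := Real.exp_le_exp.2 hδle
set_option maxHeartbeats 1000000 in
theorem stmt_5 {Ω : Type*} [MeasurableSpace Ω] (P : Measure Ω) [IsProbabilityMeasure P]
    (X : ℕ → Ω → ℝ) (hmeas : ∀ i, Measurable (X i))
    (hindep : iIndepFun X P)
    (hident : ∀ i, Measure.map (X i) P = Measure.map (X 0) P)
    (F : ℝ → ℝ) (hF : ∀ x, F x = (P {ω | X 0 ω ≤ x}).toReal)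
    (γ : ℝ) (hγ : 0 < γ)
    (hRV : ∀ ε : ℝ, 0 < ε → ∃ T : ℝ, ∀ t ≥ T, ∀ x : ℝ, 1 < x →
      |(1 - F (t * x)) / (1 - F t) * x ^ (1 / γ) - 1| ≤ ε)
    (k : ℕ → ℕ) (hk : Tendsto (fun n => (k n : ℝ)) atTop atTop)
    (hkn : Tendsto (fun n => (k n : ℝ) / n) atTop (nhds 0))
    (U : ℝ → ℝ) (hU : ∀ x, U x = sInf {y : ℝ | 1 - 1 / x ≤ F y}) :
    ∀ ζ : ℝ, 0 < ζ → ζ ≤ γ / (2 * (1 + γ)) →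
      ∃ N : ℕ, ∀ n ≥ N,
        P {ω | |orderStat n (n - k n) (fun i : Fin n => X i ω) / U ((n : ℝ) / k n) - 1| > ζ} ≤
          ENNReal.ofReal (4 * Real.exp (-(k n : ℝ) * ζ ^ 2 / (16 * γ ^ 2))) := by
  intro ζ hζ0 hζle
  -- constants
  have h1γ : 0 < 1 + γ := by linarith
  have hζγ : ζ * (2*(1+γ)) ≤ γ := (le_div_iff₀ (by positivity)).1 hζle
  have hζh : ζ < 1/2 := by nlinarith
  set δ : ℝ := ζ/(2*γ) with hδdef
  have hδ0 : 0 < δ := by positivity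
  have hδ4 : δ ≤ 1/4 := by
    rw [hδdef, div_le_div_iff₀ (by positivity) (by norm_num)]; nlinarith
  set ε : ℝ := δ^2/8 with hεdef
  have hε0 : 0 < ε := by positivity
  -- F basic facts
  have hFm : Monotone F := cdf_mono P (X 0) F hF
  have hF0 : ∀ y, 0 ≤ F y := cdf_nonneg P (X 0) F hF
  have hF1 : ∀ y, F y ≤ 1 := cdf_le_one P (X 0) F hF
  have hFc : ∀ y, (P {ω | y < X 0 ω}).toReal = 1 - F y := cdf_compl P (X 0) (hmeas 0) F hF
  -- F < 1 everywhere
  have hFlt1 : ∀ y, F y < 1 := by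
    intro y
    rcases lt_or_ge (F y) 1 with h | h
    · exact h
    · exfalso
      obtain ⟨T₀, hT₀⟩ := hRV (1/2) (by norm_num)
      have hy1 : F (max y T₀) = 1 :=
        le_antisymm (hF1 _) (le_trans h (hFm (le_max_left _ _)))
      have h3 := hT₀ (max y T₀) (le_max_right _ _) 2 one_lt_two
      rw [hy1, sub_self, div_zero, zero_mul, zero_sub, abs_neg, abs_one] at h3
      norm_num at h3
  -- RV threshold
  obtain ⟨T₁, hT⟩ := hRV ε hε0
  set T : ℝ := max T₁ 1 with hTdef
  have hT1 : 1 ≤ T := le_max_right _ _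
  have hTT₁ : T₁ ≤ T := le_max_left _ _
  -- nonemptiness of the quantile sets
  have hSne : ∀ x : ℝ, 0 < x → {y : ℝ | 1 - 1/x ≤ F y}.Nonempty := by
    intro x hx
    obtain ⟨y, hy⟩ := cdf_top P (X 0) (hmeas 0) F hF (1 - 1/x) (by
      have : 0 < 1/x := by positivity
      linarith)
    exact ⟨y, hy⟩
  obtain ⟨y₀, hy₀⟩ := cdf_bot P (X 0) (hmeas 0) F hF
  -- quantile facts for x ≥ 2
  have hUfacts : ∀ x : ℝ, 2 ≤ x →
      (1 - 1/x ≤ F (U x)) ∧ (∀ z, z < U x → F z < 1 - 1/x) := by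
    intro x hx
    have hx0 : 0 < x := by linarith
    have hhalf : (1:ℝ)/2 ≤ 1 - 1/x := by
      have : 1/x ≤ 1/2 := by
        rw [div_le_div_iff₀ hx0 two_pos]; linarith
      linarith
    have hne := hSne x hx0
    have hbdd : BddBelow {y : ℝ | 1 - 1/x ≤ F y} := by
      refine ⟨y₀, fun z hz => ?_⟩
      by_contra hzy
      push_neg at hzy
      have h1 : F z ≤ F y₀ := hFm hzy.le
      have h2 : 1 - 1/x ≤ F z := hz
      linarith
    constructor
    · apply cdf_right_cont P (X 0) (hmeas 0) F hF
      intro η hη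
      have hlt : sInf {y : ℝ | 1 - 1/x ≤ F y} < U x + η := by
        rw [hU x]; linarith
      obtain ⟨z, hzS, hzlt⟩ := exists_lt_of_csInf_lt hne hlt
      exact le_trans hzS (hFm hzlt.le)
    · intro z hz
      by_contra hc
      push_neg at hc
      have := csInf_le hbdd (hc : z ∈ {y : ℝ | 1 - 1/x ≤ F y})
      rw [← hU x] at this
      linarith
  -- U is eventually large
  have hUge : ∀ M : ℝ, ∀ x : ℝ, max 2 (2/(1 - F M)) ≤ x → M ≤ U x := by
    intro M x hx
    have hFM : F M < 1 := hFlt1 M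
    have hFM0 : 0 < 1 - F M := by linarith
    have hx2 : 2 ≤ x := le_trans (le_max_left _ _) hx
    have hx0 : 0 < x := by linarith
    have hxM : 2/(1-F M) ≤ x := le_trans (le_max_right _ _) hx
    have hgt : F M < 1 - 1/x := by
      have hinv : 1/x ≤ (1-F M)/2 := by
        rw [div_le_div_iff₀ hx0 two_pos]
        rw [div_le_iff₀ hFM0] at hxM
        linarith
      linarith
    rw [hU x]
    apply le_csInf (hSne x hx0)
    intro z hz
    by_contra hzM
    push_neg at hzM
    have h1 : F z ≤ F M := hFm hzM.le
    have h2 : 1 - 1/x ≤ F z := hz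
    linarith
  -- n/k n → ∞
  have hxktend : Tendsto (fun n : ℕ => (n:ℝ)/(k n)) atTop atTop := by
    have hpos : ∀ᶠ n : ℕ in atTop, (k n:ℝ)/n ∈ Set.Ioi (0:ℝ) := by
      filter_upwards [hk.eventually_ge_atTop 1, eventually_ge_atTop 1] with n hn1 hn2
      have hn0 : (0:ℝ) < n := by
        have : (1:ℝ) ≤ n := by exact_mod_cast hn2
        linarith
      exact div_pos (by linarith) hn0
    have h1 : Tendsto (fun n => (k n:ℝ)/n) atTop (nhdsWithin 0 (Set.Ioi 0)) :=
      tendsto_nhdsWithin_of_tendsto_nhds_of_eventually_within _ hkn hpos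
    have h2 := h1.inv_tendsto_nhdsGT_zero
    have h3 : (fun n : ℕ => ((k n:ℝ)/n))⁻¹ = fun n : ℕ => (n:ℝ)/(k n) := by
      funext n; simp [Pi.inv_apply, inv_div]
    rwa [h3] at h2
  -- choose N
  have hev : ∀ᶠ n : ℕ in atTop,
      1 ≤ k n ∧ (k n:ℝ)/n ≤ 1/2 ∧
      max 2 (2/(1 - F (max (2*T) 1))) ≤ (n:ℝ)/(k n) ∧ 1 ≤ n := by
    have e1 : ∀ᶠ n : ℕ in atTop, 1 ≤ k n := by
      filter_upwards [hk.eventually_ge_atTop 1] with n hn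
      exact_mod_cast hn
    have e2 : ∀ᶠ n : ℕ in atTop, (k n:ℝ)/n ≤ 1/2 :=
      hkn.eventually (eventually_le_nhds (by norm_num))
    have e3 : ∀ᶠ n : ℕ in atTop, max 2 (2/(1 - F (max (2*T) 1))) ≤ (n:ℝ)/(k n) :=
      hxktend.eventually_ge_atTop _
    have e4 : ∀ᶠ n : ℕ in atTop, 1 ≤ n := eventually_ge_atTop 1
    filter_upwards [e1, e2, e3, e4] with n h1 h2 h3 h4
    exact ⟨h1, h2, h3, h4⟩
  obtain ⟨N, hN⟩ := eventually_atTop.1 hev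
  refine ⟨N, fun n hn => ?_⟩
  obtain ⟨hk1, hkhalf, hxge, hn1⟩ := hN n hn
  set K := k n with hKdef
  set x : ℝ := (n:ℝ)/(K:ℝ) with hxdef
  set u : ℝ := U x with hudef
  have hn0 : (0:ℝ) < n := by exact_mod_cast hn1
  have hK0 : (0:ℝ) < K := by exact_mod_cast hk1
  have h2Kn : 2*(K:ℝ) ≤ n := by
    rw [div_le_iff₀ hn0] at hkhalf; linarith
  have hx2 : 2 ≤ x := by
    rw [hxdef, le_div_iff₀ hK0]; linarith
  have hx0 : 0 < x := by linarith
  have hKltn : K < n := by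
    have h2 : 2*K ≤ n := by exact_mod_cast h2Kn
    omega
  have hnK1 : 1 ≤ n - K := by omega
  have hnKn : n - K ≤ n := by omega
  have hUgeu := hUge (max (2*T) 1) x hxge
  have hu1 : 1 ≤ u := le_trans (le_max_right _ _) hUgeu
  have hu0 : 0 < u := by linarith
  have huT : 2*T ≤ u := le_trans (le_max_left _ _) hUgeu
  have huTT : T ≤ u := by linarith
  have h12u : (1/2:ℝ)*u ≤ (1-ζ)*u :=
    mul_le_mul_of_nonneg_right (by linarith) hu0.le
  have hyneg : T ≤ (1-ζ)*u := by linarith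
  obtain ⟨hFU, hFUlt⟩ := hUfacts x hx2
  have hnxK : (n:ℝ) * (1/x) = K := by
    rw [hxdef]; field_simp
  set yp : ℝ := (1+ζ)*u with hypdef
  set ym : ℝ := (1-ζ)*u with hymdef
  -- counting bridges
  have hbrIoi : ∀ ω, (∑ i ∈ Finset.range n, ind01 (Set.Ioi yp) (X i ω))
      = ((Finset.univ.filter (fun i : Fin n => yp < X (i:ℕ) ω)).card : ℝ) := by
    intro ω
    rw [← Fin.sum_univ_eq_sum_range (fun i => ind01 (Set.Ioi yp) (X i ω)) n,
      Finset.card_filter]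
    push_cast
    refine Finset.sum_congr rfl (fun i _ => ?_)
    unfold ind01
    rw [Set.indicator_apply]
    by_cases h : yp < X (i:ℕ) ω <;> simp [h, Set.mem_Ioi]
  have hbrIci : ∀ ω, (∑ i ∈ Finset.range n, ind01 (Set.Ici ym) (X i ω))
      = ((Finset.univ.filter (fun i : Fin n => ym ≤ X (i:ℕ) ω)).card : ℝ) := by
    intro ω
    rw [← Fin.sum_univ_eq_sum_range (fun i => ind01 (Set.Ici ym) (X i ω)) n,
      Finset.card_filter]
    push_cast
    refine Finset.sum_congr rfl (fun i _ => ?_)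
    unfold ind01
    rw [Set.indicator_apply]
    by_cases h : ym ≤ X (i:ℕ) ω <;> simp [h, Set.mem_Ici]
  -- event inclusion
  have hsub : {ω | |orderStat n (n - K) (fun i : Fin n => X i ω) / u - 1| > ζ}
      ⊆ {ω | (K:ℝ) ≤ ∑ i ∈ Finset.range n, ind01 (Set.Ioi yp) (X i ω)}
        ∪ {ω | (∑ i ∈ Finset.range n, ind01 (Set.Ici ym) (X i ω)) ≤ (K:ℝ)} := by
    intro ω hω
    simp only [Set.mem_setOf_eq, gt_iff_lt] at hω
    set Q := orderStat n (n - K) (fun i : Fin n => X i ω) with hQ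
    rcases lt_abs.1 hω with h | h
    · -- Q > yp
      left
      have hQgt : yp < Q := by
        rw [hypdef]
        have : 1 + ζ < Q/u := by linarith
        calc (1+ζ)*u < (Q/u)*u := by exact mul_lt_mul_of_pos_right this hu0
          _ = Q := by field_simp
      have h1 : ¬ (Q ≤ yp) := not_le.2 hQgt
      rw [hQ, orderStat_le_iff hnK1 hnKn] at h1
      push_neg at h1
      have hsplit : (Finset.univ.filter (fun i : Fin n => X (i:ℕ) ω ≤ yp)).card
          + (Finset.univ.filter (fun i : Fin n => ¬ X (i:ℕ) ω ≤ yp)).card = n := by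
        rw [Finset.card_filter_add_card_filter_not, Finset.card_univ,
          Fintype.card_fin]
      have hfeq : (Finset.univ.filter (fun i : Fin n => ¬ X (i:ℕ) ω ≤ yp))
          = (Finset.univ.filter (fun i : Fin n => yp < X (i:ℕ) ω)) := by
        ext i; simp [not_le]
      rw [hfeq] at hsplit
      have hge : K ≤ (Finset.univ.filter (fun i : Fin n => yp < X (i:ℕ) ω)).card := by
        omega
      show (K:ℝ) ≤ _
      rw [hbrIoi ω]
      exact_mod_cast hge
    · -- Q < ym
      right
      have hQlt : Q < ym := by
        rw [hymdef]
        have : Q/u < 1 - ζ := by linarith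
        calc Q = (Q/u)*u := by field_simp
          _ < (1-ζ)*u := by exact mul_lt_mul_of_pos_right this hu0
      rw [hQ, orderStat_lt_iff hnK1 hnKn] at hQlt
      have hsplit : (Finset.univ.filter (fun i : Fin n => X (i:ℕ) ω < ym)).card
          + (Finset.univ.filter (fun i : Fin n => ¬ X (i:ℕ) ω < ym)).card = n := by
        rw [Finset.card_filter_add_card_filter_not, Finset.card_univ,
          Fintype.card_fin]
      have hfeq : (Finset.univ.filter (fun i : Fin n => ¬ X (i:ℕ) ω < ym))
          = (Finset.univ.filter (fun i : Fin n => ym ≤ X (i:ℕ) ω)) := by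
        ext i; simp [not_lt]
      rw [hfeq] at hsplit
      have hle : (Finset.univ.filter (fun i : Fin n => ym ≤ X (i:ℕ) ω)).card ≤ K := by
        omega
      show _ ≤ (K:ℝ)
      rw [hbrIci ω]
      exact_mod_cast hle
  -- identical distributions on measurable sets
  have hident' : ∀ (s : Set ℝ), MeasurableSet s → ∀ i,
      (P (X i ⁻¹' s)).toReal = (P (X 0 ⁻¹' s)).toReal := by
    intro s hs i
    rw [← Measure.map_apply (hmeas i) hs, hident i, Measure.map_apply (hmeas 0) hs]
  -- upper tail probability bound
  have hpplus : (P (X 0 ⁻¹' (Set.Ioi yp))).toReal = 1 - F yp := by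
    rw [← hFc yp]
    congr 1
  have hppow : (0:ℝ) < (1+ζ) ^ (1/γ : ℝ) := Real.rpow_pos_of_pos (by linarith) _
  have hFu_pos : 0 < 1 - F u := by linarith [hFlt1 u]
  have hRVu := hT u (le_trans hTT₁ huTT) (1+ζ) (by linarith)
  have hstepU : (1 - F (u*(1+ζ))) * (1+ζ) ^ (1/γ : ℝ) ≤ (1+ε)*(1 - F u) := by
    have habs := (abs_le.1 hRVu).2
    rw [div_mul_eq_mul_div, sub_le_iff_le_add, div_le_iff₀ hFu_pos] at habs
    calc (1 - F (u*(1+ζ))) * (1+ζ) ^ (1/γ : ℝ) ≤ (ε + 1) * (1 - F u) := habs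
      _ = (1+ε)*(1 - F u) := by ring
  have hkeyU := key_upper hγ hζ0 hζle
  rw [← hδdef, ← hεdef] at hkeyU
  have hupperF : 1 - F yp ≤ (1 - δ) * (1/x) := by
    have hFux : 1 - F u ≤ 1/x := by linarith [hFU]
    have hyeq : yp = u*(1+ζ) := by rw [hypdef]; ring
    rw [← mul_le_mul_iff_of_pos_right hppow, hyeq]
    calc (1 - F (u*(1+ζ))) * (1+ζ) ^ (1/γ : ℝ)
        ≤ (1+ε)*(1 - F u) := hstepU
      _ ≤ (1+ε)*(1/x) := by
          apply mul_le_mul_of_nonneg_left hFux (by linarith)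
      _ ≤ ((1-δ) * (1+ζ) ^ (1/γ : ℝ))*(1/x) := by
          apply mul_le_mul_of_nonneg_right hkeyU (by positivity)
      _ = (1-δ)*(1/x)*((1+ζ) ^ (1/γ : ℝ)) := by ring
  have hpU : (n:ℝ) * ((P (X 0 ⁻¹' (Set.Ioi yp))).toReal) ≤ (1 - δ) * K := by
    rw [hpplus]
    calc (n:ℝ) * (1 - F yp) ≤ (n:ℝ) * ((1-δ)*(1/x)) := by
          apply mul_le_mul_of_nonneg_left hupperF (by linarith)
      _ = (1-δ) * ((n:ℝ)*(1/x)) := by ring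
      _ = (1-δ) * K := by rw [hnxK]
  have hup := chernoff_upper_tail P X hmeas hindep measurableSet_Ioi n K
    ((P (X 0 ⁻¹' (Set.Ioi yp))).toReal) δ
    (fun i => hident' _ measurableSet_Ioi i) hδ0 hδ4 hpU
  -- lower tail probability bound
  have hpminus : 1 - F ym ≤ (P (X 0 ⁻¹' (Set.Ici ym))).toReal := by
    rw [← hFc ym]
    apply ENNReal.toReal_mono (measure_ne_top _ _)
    apply measure_mono
    intro ω hω
    simp only [Set.mem_setOf_eq] at hω
    exact le_of_lt hω
  have hz34 : (0:ℝ) < 1 - ζ/2 := by linarith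
  have hx₁ : (1:ℝ) < (1 - ζ/2)⁻¹ := by
    rw [lt_inv_comm₀ one_pos hz34]
    simpa using by linarith
  have hRVl := hT ym (le_trans hTT₁ hyneg) ((1 - ζ/2)⁻¹) hx₁
  have hymx₁ : ym * (1 - ζ/2)⁻¹ < u := by
    rw [hymdef]
    rw [mul_comm (1-ζ) u, mul_assoc]
    have hr : (1-ζ) * (1 - ζ/2)⁻¹ < 1 := by
      rw [mul_inv_lt_iff₀ hz34]
      linarith
    calc u * ((1-ζ) * (1 - ζ/2)⁻¹) < u * 1 := by
          exact mul_lt_mul_of_pos_left hr hu0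
      _ = u := mul_one u
  have hFymx : 1/x < 1 - F (ym * (1 - ζ/2)⁻¹) := by
    have := hFUlt _ hymx₁
    linarith
  have hFym_pos : 0 < 1 - F ym := by linarith [hFlt1 ym]
  have hx₁pow : (0:ℝ) < ((1 - ζ/2)⁻¹) ^ (1/γ : ℝ) :=
    Real.rpow_pos_of_pos (by positivity) _
  have hstepL : (1 - F (ym * (1 - ζ/2)⁻¹)) * ((1 - ζ/2)⁻¹) ^ (1/γ : ℝ)
      ≤ (1+ε)*(1 - F ym) := by
    have habs := (abs_le.1 hRVl).2
    rw [div_mul_eq_mul_div, sub_le_iff_le_add, div_le_iff₀ hFym_pos] at habs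
    calc (1 - F (ym * (1 - ζ/2)⁻¹)) * ((1 - ζ/2)⁻¹) ^ (1/γ : ℝ)
        ≤ (ε + 1) * (1 - F ym) := habs
      _ = (1+ε)*(1 - F ym) := by ring
  have hkeyL := key_lower hγ hζ0 hζle
  rw [← hδdef, ← hεdef] at hkeyL
  have hlowerF : (1 + δ) * (1/x) ≤ 1 - F ym := by
    have hc1 : (1+ε)*(1+δ)*(1/x) ≤ ((1 - ζ/2)⁻¹) ^ (1/γ : ℝ) * (1/x) := by
      apply mul_le_mul_of_nonneg_right _ (by positivity)
      calc (1+ε)*(1+δ) = (1 + δ^2/8) * (1+δ) := by rw [hεdef]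
        _ ≤ ((1 - ζ/2)⁻¹) ^ (1/γ : ℝ) := hkeyL
    have hc2 : ((1 - ζ/2)⁻¹) ^ (1/γ : ℝ) * (1/x)
        ≤ ((1 - ζ/2)⁻¹) ^ (1/γ : ℝ) * (1 - F (ym * (1 - ζ/2)⁻¹)) := by
      apply mul_le_mul_of_nonneg_left (le_of_lt hFymx) (le_of_lt hx₁pow)
    have hc3 : ((1 - ζ/2)⁻¹) ^ (1/γ : ℝ) * (1 - F (ym * (1 - ζ/2)⁻¹))
        ≤ (1+ε)*(1 - F ym) := by
      rw [mul_comm]; exact hstepL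
    have hchain : (1+ε)*((1+δ)*(1/x)) ≤ (1+ε)*(1 - F ym) := by
      calc (1+ε)*((1+δ)*(1/x)) = (1+ε)*(1+δ)*(1/x) := by ring
        _ ≤ (1+ε)*(1 - F ym) := le_trans hc1 (le_trans hc2 hc3)
    exact le_of_mul_le_mul_left hchain (by linarith)
  have hpL : (1 + δ) * K ≤ (n:ℝ) * ((P (X 0 ⁻¹' (Set.Ici ym))).toReal) := by
    calc (1+δ) * (K:ℝ) = (n:ℝ) * ((1+δ)*(1/x)) := by rw [← hnxK]; ring
      _ ≤ (n:ℝ) * (1 - F ym) := by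
          apply mul_le_mul_of_nonneg_left hlowerF (by linarith)
      _ ≤ (n:ℝ) * ((P (X 0 ⁻¹' (Set.Ici ym))).toReal) := by
          apply mul_le_mul_of_nonneg_left hpminus (by linarith)
  have hlo := chernoff_lower_tail P X hmeas hindep measurableSet_Ici n K
    ((P (X 0 ⁻¹' (Set.Ici ym))).toReal) δ
    (fun i => hident' _ measurableSet_Ici i) hδ0 hδ4 hpL
  -- combine
  have hexp_eq : -(K:ℝ)*δ^2/4 = -(K:ℝ) * ζ^2 / (16*γ^2) := by
    rw [hδdef]; field_simp; ring
  have hEplus : P {ω | (K:ℝ) ≤ ∑ i ∈ Finset.range n, ind01 (Set.Ioi yp) (X i ω)}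
      ≤ ENNReal.ofReal (Real.exp (-(K:ℝ) * ζ^2 / (16*γ^2))) := by
    rw [← hexp_eq]
    exact (ENNReal.le_ofReal_iff_toReal_le (measure_ne_top _ _) (Real.exp_pos _).le).2 hup
  have hEminus : P {ω | (∑ i ∈ Finset.range n, ind01 (Set.Ici ym) (X i ω)) ≤ (K:ℝ)}
      ≤ ENNReal.ofReal (Real.exp (-(K:ℝ) * ζ^2 / (16*γ^2))) := by
    rw [← hexp_eq]
    exact (ENNReal.le_ofReal_iff_toReal_le (measure_ne_top _ _) (Real.exp_pos _).le).2 hlo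
  calc P {ω | |orderStat n (n - K) (fun i : Fin n => X i ω) / u - 1| > ζ}
      ≤ P ({ω | (K:ℝ) ≤ ∑ i ∈ Finset.range n, ind01 (Set.Ioi yp) (X i ω)}
          ∪ {ω | (∑ i ∈ Finset.range n, ind01 (Set.Ici ym) (X i ω)) ≤ (K:ℝ)}) :=
        measure_mono hsub
    _ ≤ P {ω | (K:ℝ) ≤ ∑ i ∈ Finset.range n, ind01 (Set.Ioi yp) (X i ω)}
        + P {ω | (∑ i ∈ Finset.range n, ind01 (Set.Ici ym) (X i ω)) ≤ (K:ℝ)} :=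
        measure_union_le _ _
    _ ≤ ENNReal.ofReal (Real.exp (-(K:ℝ) * ζ^2 / (16*γ^2)))
        + ENNReal.ofReal (Real.exp (-(K:ℝ) * ζ^2 / (16*γ^2))) := add_le_add hEplus hEminus
    _ = ENNReal.ofReal (2 * Real.exp (-(K:ℝ) * ζ^2 / (16*γ^2))) := by
        rw [← ENNReal.ofReal_add (Real.exp_pos _).le (Real.exp_pos _).le]
        congr 1; ring
    _ ≤ ENNReal.ofReal (4 * Real.exp (-(K:ℝ) * ζ^2 / (16*γ^2))) := by
        apply ENNReal.ofReal_le_ofReal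
        linarith [Real.exp_pos (-(K:ℝ) * ζ^2 / (16*γ^2))]
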